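/- Let G be a finite median graph, let p and q be vertices, let k ≥ 1, and suppose that the subgraph of G induced by I(p,q) contains no induced subgraph isomorphic to the hypercube graph Q_{k+1}. Then there exists an isometric embedding of I(p,q) into the k-dimensional grid, i.e., a map f : I(p,q) → ℤ^k such that d(u,v) = Σ_{i=1}^{k} |f(u)_i − f(v)_i| for all u, v ∈ I(p,q). -/

import Mathlib

open SimpleGraph Finset

/-- The graph interval `I(u,v)`: vertices on shortest `(u,v)`-paths. -/
def interval {V : Type*} (G : SimpleGraph V) (u v : V) : Set V :=
  {w | G.dist u w + G.dist w v = G.dist u v}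

/-- A median graph: connected, and every triple of vertices has a unique median. -/
def IsMedianGraph {V : Type*} (G : SimpleGraph V) : Prop :=
  G.Connected ∧ ∀ x y z : V, ∃! m : V,
    m ∈ interval G x y ∧ m ∈ interval G y z ∧ m ∈ interval G x z

/-- A set of vertices is (graph) convex if it contains all intervals between its members. -/
def GraphConvex {V : Type*} (G : SimpleGraph V) (S : Set V) : Prop :=
  ∀ u ∈ S, ∀ v ∈ S, interval G u v ⊆ S

/-- A halfspace: a convex set with convex complement. -/
def IsHalfspace {V : Type*} (G : SimpleGraph V) (H : Set V) : Prop :=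
  GraphConvex G H ∧ GraphConvex G Hᶜ

/-- The hypercube graph `Q_k`: vertices are `{0,1}^k`, adjacent iff they differ in exactly
one coordinate. -/
def cubeGraph (k : ℕ) : SimpleGraph (Fin k → Fin 2) :=
  SimpleGraph.fromRel (fun a b => ∃! i, a i ≠ b i)

/-- A graph is cube-free if it has no induced subgraph isomorphic to `Q_3`. -/
def CubeFree {V : Type*} (G : SimpleGraph V) : Prop :=
  ¬ Nonempty (cubeGraph 3 ↪g G)

/-- A 4-cycle of the subgraph of `G` induced by `S`: a 4-element vertex subset of `S`
inducing a cycle of length 4. -/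
def IsFourCycleIn {V : Type*} (G : SimpleGraph V) (S : Set V) (t : Finset V) : Prop :=
  (↑t : Set V) ⊆ S ∧ t.card = 4 ∧ Nonempty (G.induce (↑t : Set V) ≃g SimpleGraph.cycleGraph 4)

/-!
Order `I(p,q)` by `u ≤ v ↔ u ∈ I(p,v)`. In a median graph this is a distributive lattice whose
meet and join are the medians of `u, v` with `p` and with `q`, and `d(p, ·)` is its rank function;
by Birkhoff's representation, `d(u,v) = |D(u) ∆ D(v)|`, where `D(u)` is the set of sup-irreducible
elements below `u`. An antichain of `k + 1` sup-irreducibles gives lower sets realising an induced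
`Q_{k+1}`, so by Dilworth's theorem the sup-irreducibles split into `k` chains `C_i`, and
`u ↦ (|D(u) ∩ C_i|)_i` is the embedding: the traces of two lower sets on a chain are nested.
-/

section Dilworth

variable {α : Type*} [PartialOrder α]

def IsChainColoring (S : Finset α) (m : ℕ) (f : α → ℕ) : Prop :=
  (∀ x ∈ S, f x < m) ∧ ∀ x ∈ S, ∀ y ∈ S, f x = f y → x ≤ y ∨ y ≤ x

namespace IsChainColoring

variable {S : Finset α} {m : ℕ} {f : α → ℕ}

lemma injOn_of_isAntichain (hf : IsChainColoring S m f) {A : Finset α} (hAS : A ⊆ S)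
    (hA : IsAntichain (· ≤ ·) (A : Set α)) : Set.InjOn f A := by
  intro x hx y hy hxy
  by_contra hne
  rcases hf.2 x (hAS hx) y (hAS hy) hxy with h | h
  · exact hA hx hy hne h
  · exact hA hy hx (Ne.symm hne) h

lemma exists_mem_of_card_eq (hf : IsChainColoring S m f) {A : Finset α} (hAS : A ⊆ S)
    (hA : IsAntichain (· ≤ ·) (A : Set α)) (hAm : #A = m) {i : ℕ} (hi : i < m) :
    ∃ y ∈ A, f y = i := by
  obtain ⟨y, hy, hyi⟩ := surj_on_of_inj_on_of_card_le (t := range m) (fun y _ ↦ f y)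
    (fun y hy ↦ mem_range.2 (hf.1 y (hAS hy)))
    (fun _ _ ha hb h ↦ hf.injOn_of_isAntichain hAS hA ha hb h)
    (by simp [hAm]) i (mem_range.2 hi)
  exact ⟨y, hy, hyi.symm⟩

/-- For each colour, the highest element of that colour lying in an antichain of size `m`
(Galvin's proof of Dilworth's theorem). -/
lemma exists_tops (hf : IsChainColoring S m f) {A₀ : Finset α} (hA₀S : A₀ ⊆ S)
    (hA₀ : IsAntichain (· ≤ ·) (A₀ : Set α)) (hA₀m : #A₀ = m) :
    ∃ x : Fin m → α, (∀ i, x i ∈ S) ∧ (∀ i j, x i ≤ x j → i = j) ∧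
      ∀ A ⊆ S, IsAntichain (· ≤ ·) (A : Set α) → #A = m →
        ∀ i : Fin m, ∀ y ∈ A, f y = i → y ≤ x i := by
  classical
  set M : Finset α :=
    {y ∈ S | ∃ A ⊆ S, IsAntichain (· ≤ ·) (A : Set α) ∧ #A = m ∧ y ∈ A}
  have hmax : ∀ i : Fin m, ∃ x, Maximal (· ∈ {y ∈ M | f y = i}) x := by
    intro i
    obtain ⟨y, hy, hyi⟩ := hf.exists_mem_of_card_eq hA₀S hA₀ hA₀m i.2
    exact exists_maximal ⟨y, mem_filter.2 ⟨mem_filter.2 ⟨hA₀S hy, A₀, hA₀S, hA₀, hA₀m, hy⟩, hyi⟩⟩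
  choose x hx using hmax
  have hxM : ∀ i, x i ∈ M ∧ f (x i) = i := fun i ↦ mem_filter.1 (hx i).1
  have hxS : ∀ i, x i ∈ S := fun i ↦ (mem_filter.1 (hxM i).1).1
  have htop : ∀ i : Fin m, ∀ y ∈ M, f y = i → y ≤ x i := by
    intro i y hyM hyi
    rcases hf.2 y (mem_filter.1 hyM).1 (x i) (hxS i) (hyi.trans (hxM i).2.symm) with h | h
    · exact h
    · exact (hx i).2 (mem_filter.2 ⟨hyM, hyi⟩) h
  refine ⟨x, hxS, fun i j hij ↦ ?_,
    fun A hAS hA hAm i y hy hyi ↦ htop i y (mem_filter.2 ⟨hAS hy, A, hAS, hA, hAm, hy⟩) hyi⟩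
  by_contra hne
  obtain ⟨A, hAS, hA, hAm, hjA⟩ := (mem_filter.1 (hxM j).1).2
  obtain ⟨y, hyA, hyi⟩ := hf.exists_mem_of_card_eq hAS hA hAm i.2
  have hyj : y ≠ x j := by
    rintro rfl
    exact hne (Fin.ext (hyi.symm.trans (hxM j).2))
  exact hA hyA hjA hyj ((htop i y (mem_filter.2 ⟨hAS hyA, A, hAS, hA, hAm, hyA⟩) hyi).trans hij)

variable [DecidableEq α]

lemma extend_chain {K : Finset α} (hf : IsChainColoring (S \ K) (m - 1) f) (hm : 1 ≤ m)
    (hK : IsChain (· ≤ ·) (K : Set α)) :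
    IsChainColoring S m (fun x ↦ if x ∈ K then m - 1 else f x) := by
  constructor
  · intro x hx
    dsimp only
    split_ifs with hxK
    · omega
    · have := hf.1 x (mem_sdiff.2 ⟨hx, hxK⟩)
      omega
  · intro x hx y hy hxy
    by_cases hxK : x ∈ K <;> by_cases hyK : y ∈ K <;>
      simp only [hxK, hyK, if_true, if_false] at hxy
    · exact hK.total hxK hyK
    · have := hf.1 y (mem_sdiff.2 ⟨hy, hyK⟩)
      omega
    · have := hf.1 x (mem_sdiff.2 ⟨hx, hxK⟩)
      omega
    · exact hf.2 x (mem_sdiff.2 ⟨hx, hxK⟩) y (mem_sdiff.2 ⟨hy, hyK⟩) hxy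

end IsChainColoring

lemma exists_apply_le_of_maximal {S : Finset α} {m : ℕ} {a : α} (ha : Maximal (· ∈ S) a)
    (hS : ∀ A ⊆ S, IsAntichain (· ≤ ·) (A : Set α) → #A ≤ m) {x : Fin m → α}
    (hxS : ∀ i, x i ∈ S) (hxa : ∀ i, x i ≠ a) (hx : ∀ i j, x i ≤ x j → i = j) :
    ∃ i, x i ≤ a := by
  classical
  by_contra! hlt
  have hanti : IsAntichain (· ≤ ·) (↑(insert a (univ.image x)) : Set α) := by
    intro u hu v hv huv
    simp only [coe_insert, coe_image, coe_univ, Set.image_univ, Set.mem_insert_iff,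
      Set.mem_range] at hu hv
    rcases hu with rfl | ⟨i, rfl⟩ <;> rcases hv with rfl | ⟨j, rfl⟩
    · exact absurd rfl huv
    · exact fun h ↦ hxa j (le_antisymm (ha.2 (hxS j) h) h)
    · exact hlt i
    · exact fun h ↦ huv (congrArg x (hx i j h))
  have hcard : #(insert a (univ.image x)) = m + 1 := by
    rw [card_insert_of_notMem (by simpa using hxa),
      card_image_of_injective _ (fun i j h ↦ hx i j h.le), card_univ, Fintype.card_fin]
  have := hS _ (insert_subset ha.1 fun y hy ↦ by
    obtain ⟨i, -, rfl⟩ := mem_image.1 hy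
    exact hxS i) hanti
  omega

/-- The inductive step of Galvin's proof of Dilworth's theorem. -/
theorem exists_chain_of_isChainColoring_erase [DecidableEq α] {S : Finset α} {m : ℕ}
    {f : α → ℕ} {a : α} (ha : Maximal (· ∈ S) a)
    (hS : ∀ A ⊆ S, IsAntichain (· ≤ ·) (A : Set α) → #A ≤ m)
    (hf : IsChainColoring (S.erase a) m f) :
    ∃ K ⊆ S, a ∈ K ∧ IsChain (· ≤ ·) (K : Set α) ∧
      ∀ A ⊆ S \ K, IsAntichain (· ≤ ·) (A : Set α) → #A ≤ m - 1 := by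
  classical
  by_cases hfull : ∃ A ⊆ S.erase a, IsAntichain (· ≤ ·) (A : Set α) ∧ #A = m
  swap
  · simp only [not_exists, not_and] at hfull
    refine ⟨{a}, singleton_subset_iff.2 ha.1, mem_singleton_self a, by simp, fun A hA hAa ↦ ?_⟩
    rw [sdiff_singleton_eq_erase] at hA
    have := hfull A hA hAa
    have := hS A (hA.trans (erase_subset _ _)) hAa
    omega
  obtain ⟨A₀, hA₀S, hA₀, hA₀m⟩ := hfull
  obtain ⟨x, hxS, hxanti, hxtop⟩ := hf.exists_tops hA₀S hA₀ hA₀m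
  have hxa : ∀ i, x i ≠ a := fun i ↦ ne_of_mem_erase (hxS i)
  obtain ⟨i₀, hi₀⟩ := exists_apply_le_of_maximal ha hS (fun i ↦ mem_of_mem_erase (hxS i)) hxa hxanti
  set K := insert a {z ∈ S.erase a | f z = i₀ ∧ z ≤ x i₀}
  refine ⟨K, insert_subset ha.1 ((filter_subset _ _).trans (erase_subset _ _)),
    mem_insert_self _ _, ?_, fun A hA hAanti ↦ ?_⟩
  · intro u hu v hv _
    simp only [K, coe_insert, coe_filter, Set.mem_insert_iff, Set.mem_ofPred_eq] at hu hv
    rcases hu with rfl | ⟨hu, hui, hux⟩ <;> rcases hv with rfl | ⟨hv, hvi, hvx⟩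
    · exact Or.inl le_rfl
    · exact Or.inr (hvx.trans hi₀)
    · exact Or.inl (hux.trans hi₀)
    · exact hf.2 u hu v hv (hui.trans hvi.symm)
  · have hAS : A ⊆ S.erase a := fun y hy ↦
      mem_erase.2 ⟨fun h ↦ (mem_sdiff.1 (hA hy)).2 (h ▸ mem_insert_self _ _),
        (mem_sdiff.1 (hA hy)).1⟩
    by_contra! hAm
    have hAm : #A = m := le_antisymm (hS A (hAS.trans (erase_subset _ _)) hAanti) (by omega)
    obtain ⟨y, hyA, hyi⟩ := hf.exists_mem_of_card_eq hAS hAanti hAm i₀.2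
    refine (mem_sdiff.1 (hA hyA)).2 (mem_insert_of_mem (mem_filter.2 ⟨hAS hyA, hyi, ?_⟩))
    exact hxtop A hAS hAanti hAm i₀ y hyA hyi

/-- **Dilworth's theorem**, with the `m` chains given as colour classes. -/
theorem exists_isChainColoring (S : Finset α) (m : ℕ)
    (hS : ∀ A ⊆ S, IsAntichain (· ≤ ·) (A : Set α) → #A ≤ m) :
    ∃ f, IsChainColoring S m f := by
  classical
  induction S using Finset.strongInduction generalizing m with
  | H S ih =>
  obtain rfl | hne := S.eq_empty_or_nonempty
  · exact ⟨0, by simp [IsChainColoring]⟩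
  obtain ⟨a, ha⟩ := S.exists_maximal hne
  obtain ⟨f, hf⟩ := ih _ (erase_ssubset ha.1) m fun A hA ↦ hS A (hA.trans (erase_subset _ _))
  obtain ⟨K, hKS, haK, hK, hSK⟩ := exists_chain_of_isChainColoring_erase ha hS hf
  have hm : 1 ≤ m := by simpa using hS {a} (singleton_subset_iff.2 ha.1) (by simp)
  obtain ⟨g, hg⟩ := ih (S \ K) (sdiff_ssubset hKS ⟨a, haK⟩) (m - 1) hSK
  exact ⟨_, hg.extend_chain hm hK⟩

end Dilworth

open scoped symmDiff

section SymmDiff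

variable {α : Type*} [DecidableEq α]

lemma card_symmDiff_add_two_mul_card_inter (s t : Finset α) :
    #(s ∆ t) + 2 * #(s ∩ t) = #s + #t := by
  rw [Finset.symmDiff_def, card_union_of_disjoint disjoint_sdiff_sdiff]
  have hs := card_sdiff_add_card_inter s t
  have ht := card_sdiff_add_card_inter t s
  rw [inter_comm] at ht
  omega

lemma abs_card_sub_card_of_subset_or {s t : Finset α} (h : s ⊆ t ∨ t ⊆ s) :
    |(#s : ℤ) - #t| = #(s ∆ t) := by
  rcases h with h | h
  · rw [symmDiff_of_le h, abs_sub_comm, abs_of_nonneg (by simpa using card_le_card h),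
      card_sdiff_of_subset h, Nat.cast_sub (card_le_card h)]
  · rw [symmDiff_of_ge h, abs_of_nonneg (by simpa using card_le_card h),
      card_sdiff_of_subset h, Nat.cast_sub (card_le_card h)]

lemma filter_symmDiff (p : α → Prop) [DecidablePred p] (s t : Finset α) :
    (s ∆ t).filter p = s.filter p ∆ t.filter p := by
  ext x
  simp only [mem_filter, mem_symmDiff]
  tauto

end SymmDiff

section LowerSets

variable {α : Type*} [PartialOrder α]

lemma filter_subset_or_of_isLowerSet {s t : Finset α} (hs : IsLowerSet (s : Set α))
    (ht : IsLowerSet (t : Set α)) {p : α → Prop} [DecidablePred p]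
    (hp : IsChain (· ≤ ·) {x | p x}) : s.filter p ⊆ t.filter p ∨ t.filter p ⊆ s.filter p := by
  by_contra! h
  obtain ⟨x, hx, hxt⟩ := not_subset.1 h.1
  obtain ⟨y, hy, hys⟩ := not_subset.1 h.2
  rw [mem_filter] at hx hy hxt hys
  rcases hp.total hx.2 hy.2 with hxy | hyx
  · exact hxt ⟨ht hxy hy.1, hx.2⟩
  · exact hys ⟨hs hyx hx.1, hy.2⟩

theorem card_symmDiff_eq_sum_of_isChainColoring [DecidableEq α] [Fintype α] {k : ℕ} {col : α → ℕ}
    (hcol : IsChainColoring univ k col) {s t : Finset α} (hs : IsLowerSet (s : Set α))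
    (ht : IsLowerSet (t : Set α)) :
    (#(s ∆ t) : ℤ) = ∑ i : Fin k, |(#{x ∈ s | col x = i} : ℤ) - #{x ∈ t | col x = i}| := by
  rw [card_eq_sum_card_fiberwise fun x _ ↦ mem_range.2 (hcol.1 x (mem_univ x)),
    ← Fin.sum_univ_eq_sum_range]
  push_cast
  refine sum_congr rfl fun i _ ↦ ?_
  have hchain : IsChain (· ≤ ·) {x | col x = i} := fun x hx y hy _ ↦
    hcol.2 x (mem_univ x) y (mem_univ y) (hx.trans hy.symm)
  rw [filter_symmDiff,
    abs_card_sub_card_of_subset_or (filter_subset_or_of_isLowerSet hs ht hchain)]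

theorem exists_isLowerSet_card_symmDiff_eq_hammingDist_of_le_imp_eq [DecidableEq α] [Fintype α]
    {r : ℕ} (c : Fin r → α) (hc : ∀ i j, c i ≤ c j → i = j) :
    ∃ L : (Fin r → Fin 2) → Finset α, (∀ A, IsLowerSet (L A : Set α)) ∧
      ∀ A B, #(L A ∆ L B) = hammingDist A B := by
  classical
  set E : Finset α := {x | ∃ i, x < c i}
  set X : (Fin r → Fin 2) → Finset α := fun A ↦ (univ.filter fun i ↦ A i = 1).image c
  have hEX : ∀ A, Disjoint E (X A) := fun A ↦ disjoint_right.2 fun x hx hxE ↦ by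
    obtain ⟨i, -, rfl⟩ := mem_image.1 hx
    obtain ⟨j, hj⟩ := (mem_filter.1 hxE).2
    exact hj.ne (congrArg c (hc i j hj.le))
  refine ⟨fun A ↦ E ∪ X A, fun A x y hyx hx ↦ ?_, fun A B ↦ ?_⟩
  · simp only [E, X, coe_union, coe_filter, coe_image, Set.mem_union, Set.mem_image,
      mem_univ, true_and] at hx ⊢
    rcases hx with ⟨i, hi⟩ | ⟨i, hi, rfl⟩
    · exact Or.inl ⟨i, hyx.trans_lt hi⟩
    · rcases hyx.lt_or_eq with h | rfl
      · exact Or.inl ⟨i, h⟩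
      · exact Or.inr ⟨i, hi, rfl⟩
  · have hsymm : (E ∪ X A) ∆ (E ∪ X B) = X A ∆ X B := by
      ext x
      have hA : x ∈ X A → x ∉ E := fun h ↦ disjoint_right.1 (hEX A) h
      have hB : x ∈ X B → x ∉ E := fun h ↦ disjoint_right.1 (hEX B) h
      simp only [mem_symmDiff, mem_union]
      tauto
    have hinj : Function.Injective c := fun i j h ↦ hc i j h.le
    rw [hsymm, ← image_symmDiff _ _ hinj, card_image_of_injective _ hinj, hammingDist]
    congr 1
    ext i
    simp only [mem_symmDiff, mem_filter, mem_univ, true_and]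
    generalize A i = a, B i = b
    revert a b
    decide

theorem IsAntichain.exists_isLowerSet_card_symmDiff_eq_hammingDist [DecidableEq α] [Fintype α]
    {A : Finset α} (hA : IsAntichain (· ≤ ·) (A : Set α)) :
    ∃ L : (Fin #A → Fin 2) → Finset α, (∀ B, IsLowerSet (L B : Set α)) ∧
      ∀ B C, #(L B ∆ L C) = hammingDist B C :=
  exists_isLowerSet_card_symmDiff_eq_hammingDist_of_le_imp_eq
    (fun i : Fin #A ↦ (A.equivFin.symm i : α)) fun i j hij ↦ by
    by_contra hne
    exact hA (A.equivFin.symm i).2 (A.equivFin.symm j).2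
      (fun h ↦ hne (A.equivFin.symm.injective (Subtype.ext h))) hij

end LowerSets

section Lattice

variable {α : Type*} [Lattice α]

theorem isModularLattice_of_strictMono {φ : α → ℕ} (hφ : StrictMono φ)
    (hmod : ∀ a b, φ (a ⊓ b) + φ (a ⊔ b) = φ a + φ b) : IsModularLattice α where
  sup_inf_le_assoc_of_le {x} y {z} hxz := by
    have hle : x ⊔ y ⊓ z ≤ (x ⊔ y) ⊓ z :=
      le_inf (sup_le_sup_left inf_le_left _) (sup_le hxz inf_le_right)
    have h₁ := hmod x (y ⊓ z)
    have h₂ := hmod (x ⊔ y) z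
    have h₃ := hmod y z
    have h₄ := hmod x y
    rw [inf_comm y z, ← inf_assoc, inf_eq_left.2 hxz, inf_comm z y] at h₁
    rw [sup_comm x y, sup_assoc, sup_eq_right.2 hxz, sup_comm y x] at h₂
    have heq : φ (x ⊔ y ⊓ z) = φ ((x ⊔ y) ⊓ z) := by omega
    exact (hle.lt_or_eq.resolve_left fun hlt ↦ (hφ hlt).ne heq).ge

theorem inf_sup_le_of_median_eq [IsModularLattice α]
    (h : ∀ x y z : α, x ⊓ y ⊔ y ⊓ z ⊔ z ⊓ x = (x ⊔ y) ⊓ (y ⊔ z) ⊓ (z ⊔ x)) (x y z : α) :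
    x ⊓ (y ⊔ z) ≤ x ⊓ y ⊔ x ⊓ z :=
  calc x ⊓ (y ⊔ z) = x ⊓ ((x ⊔ y) ⊓ (y ⊔ z) ⊓ (z ⊔ x)) :=
        le_antisymm (le_inf inf_le_left (le_inf (le_inf (inf_le_left.trans le_sup_left)
          inf_le_right) (inf_le_left.trans le_sup_right)))
          (inf_le_inf_left _ (inf_le_left.trans inf_le_right))
    _ = (x ⊓ y ⊔ z ⊓ x ⊔ y ⊓ z) ⊓ x := by rw [← h, inf_comm, sup_right_comm (x ⊓ y)]
    _ = x ⊓ y ⊔ z ⊓ x ⊔ y ⊓ z ⊓ x := sup_inf_assoc_of_le _ (sup_le inf_le_left inf_le_right)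
    _ ≤ x ⊓ y ⊔ x ⊓ z := sup_le (sup_le le_sup_left (inf_comm z x ▸ le_sup_right))
        (le_sup_of_le_left (le_inf inf_le_right (inf_le_left.trans inf_le_left)))

end Lattice

section Birkhoff

variable {α : Type*} [DistribLattice α] [Fintype α] [DecidablePred (SupIrred : α → Prop)]
  [OrderBot α]

open OrderEmbedding

lemma mem_birkhoffFinset {a : α} {j : {a : α // SupIrred a}} :
    j ∈ birkhoffFinset a ↔ j.1 ≤ a := by
  rw [← mem_coe, coe_birkhoffFinset, birkhoffSet_apply]
  rfl

lemma isLowerSet_birkhoffFinset (a : α) :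
    IsLowerSet (birkhoffFinset a : Set {a : α // SupIrred a}) := by
  rw [coe_birkhoffFinset, birkhoffSet_apply]
  exact (OrderIso.lowerSetSupIrred a).lower

lemma exists_birkhoffFinset_eq {s : Finset {a : α // SupIrred a}}
    (hs : IsLowerSet (s : Set {a : α // SupIrred a})) :
    ∃ a : α, birkhoffFinset a = s :=
  ⟨OrderIso.lowerSetSupIrred.symm ⟨s, hs⟩, by
    rw [← coe_inj, coe_birkhoffFinset, birkhoffSet_apply, OrderIso.apply_symm_apply]
    rfl⟩

lemma card_birkhoffFinset_of_covBy {u v : α} (h : u ⋖ v) :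
    #(birkhoffFinset v) = #(birkhoffFinset u) + 1 := by
  classical
  have hsub : birkhoffFinset u ⊆ birkhoffFinset v := birkhoffFinset.monotone h.le
  have hsup : ∀ j ∈ birkhoffFinset v \ birkhoffFinset u, u ⊔ j.1 = v := fun j hj ↦ by
    rw [mem_sdiff, mem_birkhoffFinset, mem_birkhoffFinset] at hj
    exact (h.eq_or_eq le_sup_left (sup_le h.le hj.1)).resolve_left
      fun e ↦ hj.2 (le_sup_right.trans e.le)
  have hle : ∀ i ∈ birkhoffFinset v \ birkhoffFinset u,
      ∀ j ∈ birkhoffFinset v \ birkhoffFinset u, i.1 ≤ j.1 := fun i hi j hj ↦ by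
    have hij : i.1 ≤ u ⊔ j.1 := by
      rw [hsup j hj, ← hsup i hi]
      exact le_sup_right
    exact (i.2.supPrime.le_sup.1 hij).resolve_left fun hiu ↦
      (mem_sdiff.1 hi).2 (mem_birkhoffFinset.2 hiu)
  obtain ⟨j, hj⟩ : (birkhoffFinset v \ birkhoffFinset u).Nonempty :=
    sdiff_nonempty.2 fun h' ↦ h.lt.ne (birkhoffFinset.injective (hsub.antisymm h'))
  rw [← card_sdiff_add_card_eq_card hsub, add_comm, card_eq_one.2 ⟨j,
    eq_singleton_iff_unique_mem.2 ⟨hj, fun i hi ↦ Subtype.ext ((hle i hi j hj).antisymm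
      (hle j hj i hi))⟩⟩]

theorem eq_card_birkhoffFinset {φ : α → ℕ} (hbot : φ ⊥ = 0)
    (hcov : ∀ u v, u ⋖ v → φ v = φ u + 1) (u : α) : φ u = #(birkhoffFinset u) := by
  classical
  induction u using WellFoundedLT.induction with
  | _ u ih =>
  obtain rfl | hu := eq_or_ne u ⊥
  · rw [hbot, eq_comm, card_eq_zero, eq_empty_iff_forall_notMem]
    exact fun j hj ↦ j.2.ne_bot (le_bot_iff.1 (mem_birkhoffFinset.1 hj))
  obtain ⟨w, -, hw⟩ := exists_le_covBy_of_lt (bot_lt_iff_ne_bot.2 hu)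
  rw [hcov w u hw, card_birkhoffFinset_of_covBy hw, ih w hw.lt]

end Birkhoff

section Interval

variable {V : Type*} {G : SimpleGraph V}

lemma mem_interval {u v w : V} : w ∈ interval G u v ↔ G.dist u w + G.dist w v = G.dist u v :=
  Iff.rfl

lemma interval_comm (u v : V) : interval G u v = interval G v u := by
  ext w
  have := dist_comm (G := G) (u := u) (v := w)
  have := dist_comm (G := G) (u := w) (v := v)
  have := dist_comm (G := G) (u := u) (v := v)
  simp only [mem_interval]
  omega

lemma left_mem_interval (u v : V) : u ∈ interval G u v := by
  simp [mem_interval]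

lemma mem_interval_iff_mem_interval {p q u v : V} (hu : u ∈ interval G p q)
    (hv : v ∈ interval G p q) : u ∈ interval G p v ↔ v ∈ interval G u q := by
  simp only [mem_interval] at *
  omega

namespace SimpleGraph.Connected

lemma mem_interval_trans (hc : G.Connected) {b x y z : V} (hx : x ∈ interval G b y)
    (hy : y ∈ interval G b z) : x ∈ interval G b z := by
  simp only [mem_interval] at *
  have := hc.dist_triangle (u := b) (v := x) (w := z)
  have := hc.dist_triangle (u := x) (v := y) (w := z)
  omega

lemma eq_of_mem_interval (hc : G.Connected) {b x y : V} (hx : x ∈ interval G b y)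
    (hy : y ∈ interval G b x) : x = y := by
  rw [mem_interval, dist_comm (u := y)] at *
  exact hc.dist_eq_zero_iff.1 (by omega)

lemma exists_adj_mem_interval (hc : G.Connected) {u v : V} (h : u ≠ v) :
    ∃ w, G.Adj u w ∧ w ∈ interval G u v := by
  obtain ⟨W, hW⟩ := hc.exists_walk_length_eq_dist u v
  cases W with
  | nil => exact absurd rfl h
  | cons hadj W' =>
    rename_i w
    refine ⟨w, hadj, ?_⟩
    have := dist_le W'
    have := hc.dist_triangle (u := u) (v := w) (w := v)
    have := dist_eq_one_iff_adj.2 hadj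
    rw [Walk.length_cons] at hW
    rw [mem_interval]
    omega

lemma interval_subset_left (hc : G.Connected) {p q u : V} (hu : u ∈ interval G p q) :
    interval G p u ⊆ interval G p q :=
  fun _ hx ↦ hc.mem_interval_trans hx hu

lemma interval_subset_right (hc : G.Connected) {p q u : V} (hu : u ∈ interval G p q) :
    interval G u q ⊆ interval G p q := by
  rw [interval_comm u, interval_comm p]
  exact hc.interval_subset_left (interval_comm p q ▸ hu)

end SimpleGraph.Connected

namespace IsMedianGraph

variable (hG : IsMedianGraph G)

noncomputable def med (x y z : V) : V := (hG.2 x y z).choose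

lemma med_mem₁₂ (x y z : V) : hG.med x y z ∈ interval G x y := (hG.2 x y z).choose_spec.1.1

lemma med_mem₂₃ (x y z : V) : hG.med x y z ∈ interval G y z := (hG.2 x y z).choose_spec.1.2.1

lemma med_mem₁₃ (x y z : V) : hG.med x y z ∈ interval G x z := (hG.2 x y z).choose_spec.1.2.2

lemma eq_med {x y z m : V} (h₁₂ : m ∈ interval G x y) (h₂₃ : m ∈ interval G y z)
    (h₁₃ : m ∈ interval G x z) : m = hG.med x y z :=
  (hG.2 x y z).unique ⟨h₁₂, h₂₃, h₁₃⟩ (hG.2 x y z).choose_spec.1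

lemma med_comm (x y z : V) : hG.med x y z = hG.med y x z :=
  hG.eq_med (interval_comm x y ▸ hG.med_mem₁₂ x y z) (hG.med_mem₁₃ x y z) (hG.med_mem₂₃ x y z)

lemma dist_add_two_mul_dist_med (u v b : V) :
    G.dist u v + 2 * G.dist b (hG.med u v b) = G.dist b u + G.dist b v := by
  have h₁ := hG.med_mem₁₂ u v b
  have h₂ := hG.med_mem₂₃ u v b
  have h₃ := hG.med_mem₁₃ u v b
  rw [mem_interval] at h₁ h₂ h₃
  have := dist_comm (G := G) (u := b) (v := u)
  have := dist_comm (G := G) (u := b) (v := v)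
  have := dist_comm (G := G) (u := b) (v := hG.med u v b)
  have := dist_comm (G := G) (u := v) (v := hG.med u v b)
  omega

lemma mem_interval_med {b u v w : V} (hu : w ∈ interval G b u) (hv : w ∈ interval G b v) :
    w ∈ interval G b (hG.med u v b) := by
  have htuv := hG.med_mem₁₂ u v w
  have htvw := hG.med_mem₂₃ u v w
  have htuw := hG.med_mem₁₃ u v w
  generalize hG.med u v w = t at htuv htvw htuw
  rw [mem_interval] at hu hv htuv htvw htuw
  have := hG.1.dist_triangle (u := b) (v := w) (w := t)
  have := hG.1.dist_triangle (u := b) (v := t) (w := u)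
  have := hG.1.dist_triangle (u := b) (v := t) (w := v)
  have := dist_comm (G := G) (u := w) (v := t)
  have := dist_comm (G := G) (u := w) (v := u)
  have := dist_comm (G := G) (u := w) (v := v)
  have := dist_comm (G := G) (u := v) (v := t)
  have := dist_comm (G := G) (u := u) (v := t)
  -- `t` lies on geodesics `b, w, t, u` and `b, t, v`, hence it is also the median of `u, v, b`.
  have hbt : t ∈ interval G b v := by rw [mem_interval]; omega
  have htb : t = hG.med u v b := hG.eq_med (by rw [mem_interval]; omega)
    (by rw [interval_comm]; exact hbt) (by rw [interval_comm, mem_interval]; omega)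
  rw [← htb, mem_interval]
  omega

variable {p q u v w : V}

lemma med_mem_interval_left (hu : u ∈ interval G p q) : hG.med u v p ∈ interval G p q :=
  hG.1.interval_subset_left hu (interval_comm u p ▸ hG.med_mem₁₃ u v p)

lemma med_mem_interval_right (hu : u ∈ interval G p q) : hG.med u v q ∈ interval G p q :=
  hG.1.interval_subset_right hu (hG.med_mem₁₃ u v q)

lemma mem_interval_med_right (hu : u ∈ interval G p q) : u ∈ interval G p (hG.med u v q) :=
  (mem_interval_iff_mem_interval hu (hG.med_mem_interval_right hu)).2 (hG.med_mem₁₃ u v q)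

lemma med_mem_interval_of_mem_interval (hu : u ∈ interval G p q) (hv : v ∈ interval G p q)
    (hw : w ∈ interval G p q) (huw : u ∈ interval G p w) (hvw : v ∈ interval G p w) :
    hG.med u v q ∈ interval G p w := by
  rw [mem_interval_iff_mem_interval hu hw, interval_comm] at huw
  rw [mem_interval_iff_mem_interval hv hw, interval_comm] at hvw
  rw [mem_interval_iff_mem_interval (hG.med_mem_interval_right hu) hw, interval_comm]
  exact hG.mem_interval_med huw hvw

end IsMedianGraph

end Interval

section Cube

lemma cubeGraph_adj_iff {r : ℕ} {A B : Fin r → Fin 2} :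
    (cubeGraph r).Adj A B ↔ hammingDist A B = 1 := by
  rw [cubeGraph, fromRel_adj, hammingDist, ← Fintype.existsUnique_iff_card_one]
  refine ⟨fun ⟨_, h⟩ ↦ h.elim id fun h ↦ by simpa only [ne_comm] using h, fun h ↦ ⟨?_, Or.inl h⟩⟩
  rintro rfl
  exact h.exists.elim fun _ hi ↦ hi rfl

lemma nonempty_cubeGraph_embedding {V : Type*} {G : SimpleGraph V} {S : Set V} {r : ℕ}
    (g : (Fin r → Fin 2) → S) (hg : ∀ A B, G.dist (g A) (g B) = hammingDist A B) :
    Nonempty (cubeGraph r ↪g G.induce S) :=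
  ⟨{ toFun := g
     inj' := fun A B h ↦ hammingDist_eq_zero.1 (by rw [← hg, h, dist_self])
     map_rel_iff' := by
       intro A B
       change G.Adj (g A) (g B) ↔ _
       rw [cubeGraph_adj_iff, ← hg, dist_eq_one_iff_adj] }⟩

end Cube

/-- The interval `I(p,q)` of a median graph, ordered by `u ≤ v ↔ u ∈ I(p,v)`. It depends on `hG`
so that its lattice structure can be an instance. -/
def MedianInterval {V : Type*} {G : SimpleGraph V} (_ : IsMedianGraph G) (p q : V) : Type _ :=
  {x // x ∈ interval G p q}

namespace MedianInterval

variable {V : Type*} {G : SimpleGraph V} {hG : IsMedianGraph G} {p q : V}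

instance : PartialOrder (MedianInterval hG p q) where
  le u v := u.1 ∈ interval G p v.1
  le_refl u := by simp [mem_interval]
  le_trans _ _ _ := hG.1.mem_interval_trans
  le_antisymm _ _ huv hvu := Subtype.ext (hG.1.eq_of_mem_interval huv hvu)

lemma le_iff {u v : MedianInterval hG p q} : u ≤ v ↔ u.1 ∈ interval G p v.1 := Iff.rfl

noncomputable instance : Lattice (MedianInterval hG p q) where
  sup u v := ⟨hG.med u.1 v.1 q, hG.med_mem_interval_right u.2⟩
  inf u v := ⟨hG.med u.1 v.1 p, hG.med_mem_interval_left u.2⟩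
  le_sup_left u _ := hG.mem_interval_med_right u.2
  le_sup_right u v := by
    change v.1 ∈ interval G p (hG.med u.1 v.1 q)
    rw [hG.med_comm]
    exact hG.mem_interval_med_right v.2
  sup_le u v w := hG.med_mem_interval_of_mem_interval u.2 v.2 w.2
  inf_le_left u v := by
    change _ ∈ interval G p u.1
    exact interval_comm u.1 p ▸ hG.med_mem₁₃ u.1 v.1 p
  inf_le_right u v := by
    change _ ∈ interval G p v.1
    exact interval_comm v.1 p ▸ hG.med_mem₂₃ u.1 v.1 p
  le_inf _ _ _ := hG.mem_interval_med

instance : OrderBot (MedianInterval hG p q) where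
  bot := ⟨p, left_mem_interval p q⟩
  bot_le u := left_mem_interval p u.1

lemma coe_sup (u v : MedianInterval hG p q) : (u ⊔ v).1 = hG.med u.1 v.1 q := rfl

lemma dist_add_two_mul_dist_inf (u v : MedianInterval hG p q) :
    G.dist u.1 v.1 + 2 * G.dist p (u ⊓ v).1 = G.dist p u.1 + G.dist p v.1 :=
  hG.dist_add_two_mul_dist_med u.1 v.1 p

lemma dist_add_dist_add_dist_eq_two_mul_dist_sup (u v : MedianInterval hG p q) :
    G.dist p u.1 + G.dist p v.1 + G.dist u.1 v.1 = 2 * G.dist p (u ⊔ v).1 := by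
  have hu : u ≤ u ⊔ v := le_sup_left
  have hv : v ≤ u ⊔ v := le_sup_right
  have huv := hG.med_mem₁₂ u.1 v.1 q
  rw [le_iff, mem_interval, coe_sup] at hu hv
  rw [mem_interval] at huv
  rw [coe_sup]
  have := dist_comm (G := G) (u := hG.med u.1 v.1 q) (v := v.1)
  omega

lemma dist_inf_add_dist_sup (u v : MedianInterval hG p q) :
    G.dist p (u ⊓ v).1 + G.dist p (u ⊔ v).1 = G.dist p u.1 + G.dist p v.1 := by
  have := dist_add_two_mul_dist_inf u v
  have := dist_add_dist_add_dist_eq_two_mul_dist_sup u v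
  omega

lemma strictMono_dist : StrictMono fun u : MedianInterval hG p q ↦ G.dist p u.1 := by
  intro u v huv
  have hle : u ≤ v := huv.le
  have := hG.1.pos_dist_of_ne fun h ↦ huv.ne (Subtype.ext h)
  rw [le_iff, mem_interval] at hle
  dsimp only
  omega

instance : IsModularLattice (MedianInterval hG p q) :=
  isModularLattice_of_strictMono strictMono_dist dist_inf_add_dist_sup

lemma mem_interval_of_inf_le {x y w : MedianInterval hG p q} (h₁ : x ⊓ y ≤ w)
    (h₂ : w ≤ x ⊓ w ⊔ y ⊓ w) : w.1 ∈ interval G x.1 y.1 := by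
  have hsup : x ⊓ w ⊔ y ⊓ w = w := le_antisymm (sup_le inf_le_right inf_le_right) h₂
  have hinf : x ⊓ w ⊓ (y ⊓ w) = x ⊓ y := by
    rw [inf_inf_inf_comm, inf_idem, inf_eq_left.2 h₁]
  have hmod := dist_inf_add_dist_sup (x ⊓ w) (y ⊓ w)
  rw [hsup, hinf] at hmod
  have := dist_add_two_mul_dist_inf x w
  have := dist_add_two_mul_dist_inf y w
  have := dist_add_two_mul_dist_inf x y
  have := dist_comm (G := G) (u := y.1) (v := w.1)
  rw [mem_interval]
  omega

lemma mem_interval_of_le_sup {x y w : MedianInterval hG p q} (h₁ : w ≤ x ⊔ y)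
    (h₂ : (x ⊔ w) ⊓ (y ⊔ w) ≤ w) : w.1 ∈ interval G x.1 y.1 := by
  have hinf : (x ⊔ w) ⊓ (y ⊔ w) = w := le_antisymm h₂ (le_inf le_sup_right le_sup_right)
  have hsup : x ⊔ w ⊔ (y ⊔ w) = x ⊔ y := by
    rw [sup_sup_sup_comm, sup_idem, sup_eq_left.2 h₁]
  have hmod := dist_inf_add_dist_sup (x ⊔ w) (y ⊔ w)
  rw [hsup, hinf] at hmod
  have := dist_add_dist_add_dist_eq_two_mul_dist_sup x w
  have := dist_add_dist_add_dist_eq_two_mul_dist_sup y w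
  have := dist_add_dist_add_dist_eq_two_mul_dist_sup x y
  have := dist_comm (G := G) (u := y.1) (v := w.1)
  rw [mem_interval]
  omega

lemma mem_interval_inf_sup_inf (x y z : MedianInterval hG p q) :
    (x ⊓ y ⊔ y ⊓ z ⊔ z ⊓ x).1 ∈ interval G x.1 y.1 :=
  mem_interval_of_inf_le (le_sup_left.trans le_sup_left) (sup_le (sup_le
    (le_sup_of_le_left (le_inf inf_le_left (le_sup_left.trans le_sup_left)))
    (le_sup_of_le_right (le_inf inf_le_left (le_sup_right.trans le_sup_left))))
    (le_sup_of_le_left (le_inf inf_le_right le_sup_right)))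

lemma mem_interval_sup_inf_sup (x y z : MedianInterval hG p q) :
    ((x ⊔ y) ⊓ (y ⊔ z) ⊓ (z ⊔ x)).1 ∈ interval G x.1 y.1 := by
  have hxy : (x ⊔ y) ⊓ (y ⊔ z) ⊓ (z ⊔ x) ≤ x ⊔ y := inf_le_left.trans inf_le_left
  have hyz : (x ⊔ y) ⊓ (y ⊔ z) ⊓ (z ⊔ x) ≤ y ⊔ z := inf_le_left.trans inf_le_right
  have hzx : (x ⊔ y) ⊓ (y ⊔ z) ⊓ (z ⊔ x) ≤ z ⊔ x := inf_le_right
  exact mem_interval_of_le_sup hxy (le_inf (le_inf (inf_le_left.trans (sup_le le_sup_left hxy))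
    (inf_le_right.trans (sup_le le_sup_left hyz))) (inf_le_left.trans (sup_le le_sup_right hzx)))

/-- Both sides are the graph median of `x, y, z`. -/
lemma inf_sup_inf_eq_sup_inf_sup (x y z : MedianInterval hG p q) :
    x ⊓ y ⊔ y ⊓ z ⊔ z ⊓ x = (x ⊔ y) ⊓ (y ⊔ z) ⊓ (z ⊔ x) := by
  refine Subtype.ext ((hG.eq_med (z := z.1) (mem_interval_inf_sup_inf x y z) ?_ ?_).trans
    (hG.eq_med (z := z.1) (mem_interval_sup_inf_sup x y z) ?_ ?_).symm)
  · convert mem_interval_inf_sup_inf y z x using 2; ac_rfl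
  · convert mem_interval_inf_sup_inf x z y using 2; ac_rfl
  · convert mem_interval_sup_inf_sup y z x using 2; ac_rfl
  · convert mem_interval_sup_inf_sup x z y using 2; ac_rfl

noncomputable instance : DistribLattice (MedianInterval hG p q) :=
  .ofInfSupLe (inf_sup_le_of_median_eq inf_sup_inf_eq_sup_inf_sup)

instance [Finite V] : Finite (MedianInterval hG p q) := Subtype.finite

noncomputable instance [Finite V] : Fintype (MedianInterval hG p q) := Fintype.ofFinite _

lemma dist_eq_one_of_covBy {u v : MedianInterval hG p q} (h : u ⋖ v) : G.dist u.1 v.1 = 1 := by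
  obtain ⟨w, hadj, hw⟩ := hG.1.exists_adj_mem_interval fun e ↦ h.lt.ne (Subtype.ext e)
  have hwv : w ∈ interval G p v.1 := by
    rw [interval_comm] at hw ⊢
    exact hG.1.mem_interval_trans hw (interval_comm p v.1 ▸ le_iff.1 h.le)
  have huw : u.1 ∈ interval G p w := (mem_interval_iff_mem_interval h.le hwv).2 hw
  obtain hwu | hwv' := h.eq_or_eq (c := ⟨w, hG.1.interval_subset_left v.2 hwv⟩) huw hwv
  · exact absurd (congrArg Subtype.val hwu) hadj.ne'
  · rw [← congrArg Subtype.val hwv']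
    exact dist_eq_one_iff_adj.2 hadj

open OrderEmbedding

open scoped Classical in
lemma dist_eq_card_birkhoffFinset [Finite V] (u : MedianInterval hG p q) :
    G.dist p u.1 = #(birkhoffFinset u) :=
  eq_card_birkhoffFinset (φ := fun u : MedianInterval hG p q ↦ G.dist p u.1) dist_self
    (fun u v h ↦ by
      have hle := le_iff.1 h.le
      rw [mem_interval, dist_eq_one_of_covBy h] at hle
      exact hle.symm) u

open scoped Classical symmDiff in
lemma dist_eq_card_symmDiff [Finite V] (u v : MedianInterval hG p q) :
    G.dist u.1 v.1 = #(birkhoffFinset u ∆ birkhoffFinset v) := by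
  have := card_symmDiff_add_two_mul_card_inter (birkhoffFinset u) (birkhoffFinset v)
  rw [← birkhoffFinset_inf, ← dist_eq_card_birkhoffFinset, ← dist_eq_card_birkhoffFinset,
    ← dist_eq_card_birkhoffFinset] at this
  have := dist_add_two_mul_dist_inf u v
  omega

open scoped Classical in
theorem nonempty_cubeGraph_embedding_of_isAntichain [Finite V]
    {A : Finset {a : MedianInterval hG p q // SupIrred a}}
    (hA : IsAntichain (· ≤ ·) (A : Set {a : MedianInterval hG p q // SupIrred a})) :
    Nonempty (cubeGraph #A ↪g G.induce (interval G p q)) := by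
  obtain ⟨L, hL, hLA⟩ := hA.exists_isLowerSet_card_symmDiff_eq_hammingDist
  choose g hg using fun B ↦ exists_birkhoffFinset_eq (hL B)
  exact nonempty_cubeGraph_embedding g fun B C ↦ by rw [dist_eq_card_symmDiff, hg, hg, hLA]

end MedianInterval

theorem interval_embeds_grid_general {V : Type*} [Fintype V] (G : SimpleGraph V)
    (hG : IsMedianGraph G) (p q : V) (k : ℕ)
    (hfree : ¬ Nonempty (cubeGraph (k + 1) ↪g G.induce (interval G p q))) :
    ∃ f : V → Fin k → ℤ, ∀ u ∈ interval G p q, ∀ v ∈ interval G p q,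
      (G.dist u v : ℤ) = ∑ i : Fin k, |f u i - f v i| := by
  classical
  have hwidth : ∀ A : Finset {a : MedianInterval hG p q // SupIrred a},
      IsAntichain (· ≤ ·) (A : Set {a : MedianInterval hG p q // SupIrred a}) → #A ≤ k :=
      fun A hA ↦ by
    by_contra! hAk
    obtain ⟨B, hBA, hB⟩ := exists_subset_card_eq hAk
    obtain ⟨e⟩ := MedianInterval.nonempty_cubeGraph_embedding_of_isAntichain (hA.subset hBA)
    rw [hB] at e
    exact hfree ⟨e⟩
  obtain ⟨col, hcol⟩ := exists_isChainColoring univ k fun A _ ↦ hwidth A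
  refine ⟨fun v ↦ if hv : v ∈ interval G p q then fun i ↦
      #{j ∈ OrderEmbedding.birkhoffFinset (⟨v, hv⟩ : MedianInterval hG p q) | col j = i}
      else 0,
    fun u hu v hv ↦ ?_⟩
  simp only [dif_pos hu, dif_pos hv]
  rw [MedianInterval.dist_eq_card_symmDiff (⟨u, hu⟩ : MedianInterval hG p q) ⟨v, hv⟩]
  exact card_symmDiff_eq_sum_of_isChainColoring hcol (isLowerSet_birkhoffFinset _)
    (isLowerSet_birkhoffFinset _)

/-- If the subgraph of a finite median graph induced by `I(p,q)` contains no
induced `Q_{k+1}` (`k ≥ 1`), then `I(p,q)` isometrically embeds into the grid `ℤ^k`. -/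
theorem interval_embeds_grid {V : Type*} [Fintype V] (G : SimpleGraph V)
    (hG : IsMedianGraph G) (p q : V) (k : ℕ) (hk : 1 ≤ k)
    (hfree : ¬ Nonempty (cubeGraph (k + 1) ↪g G.induce (interval G p q))) :
    ∃ f : V → Fin k → ℤ, ∀ u ∈ interval G p q, ∀ v ∈ interval G p q,
      (G.dist u v : ℤ) = ∑ i : Fin k, |f u i - f v i| :=
  interval_embeds_grid_general G hG p q k hfree
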